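/- arXiv:1504.08321 — 3 statements merged into one kernel-verified Lean document; each statement's English description precedes it below -/
import Mathlib

section
/- For every conditional statement P over atoms A, there exists a basic form Q such that CP proves P = Q, where CP is the axiom system consisting of: x◁T▷y = x, x◁F▷y = y, T◁x▷F = x, and x◁(y◁z▷u)▷v = (x◁y▷v)◁z▷(x◁u▷v). -/
inductive CS (A : Type) : Type
  | tt : CS A
  | ff : CS A
  | atom : A → CS A
  | cond : CS A → CS A → CS A → CS A

namespace CS

variable {A : Type}

/-- Basic forms: the central condition is always an atom. -/
inductive IsBasic : CS A → Prop
  | tt : IsBasic tt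
  | ff : IsBasic ff
  | cond {p q : CS A} (a : A) : IsBasic p → IsBasic q → IsBasic (cond p (atom a) q)

/-- Provability from the axioms CP of proposition algebra. `cond x y z` is x ◁ y ▷ z. -/
inductive CP : CS A → CS A → Prop
  | refl (p : CS A) : CP p p
  | symm {p q} : CP p q → CP q p
  | trans {p q r} : CP p q → CP q r → CP p r
  | congr {p p' q q' r r'} :
      CP p p' → CP q q' → CP r r' → CP (.cond p q r) (.cond p' q' r')
  | cp1 (x y : CS A) : CP (.cond x .tt y) x
  | cp2 (x y : CS A) : CP (.cond x .ff y) y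
  | cp3 (x : CS A) : CP (.cond .tt x .ff) x
  | cp4 (x y z u v : CS A) :
      CP (.cond x (.cond y z u) v) (.cond (.cond x y v) z (.cond x u v))

/-- Evaluation trees with leaves T, F and internal nodes labeled by atoms. -/
inductive ET (A : Type) : Type
  | tt : ET A
  | ff : ET A
  | node : ET A → A → ET A → ET A

/-- Leaf replacement X[T↦Y, F↦Z] on evaluation trees. -/
def ET.repl : ET A → ET A → ET A → ET A
  | .tt, y, _ => y
  | .ff, _, z => z
  | .node l a r, y, z => .node (ET.repl l y z) a (ET.repl r y z)

/-- Short-circuit evaluation into evaluation trees. -/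
def se : CS A → ET A
  | .tt => .tt
  | .ff => .ff
  | .atom a => .node .tt a .ff
  | .cond p q r => ET.repl (se q) (se p) (se r)

/-- Syntactic leaf replacement P[T↦Q, F↦R] on (basic) conditional statements. -/
def srepl : CS A → CS A → CS A → CS A
  | .tt, y, _ => y
  | .ff, _, z => z
  | .atom a, _, _ => .atom a
  | .cond p c q, y, z => .cond (srepl p y z) c (srepl q y z)

/-- The basic form function. -/
def bf : CS A → CS A
  | .tt => .tt
  | .ff => .ff
  | .atom a => .cond .tt (.atom a) .ff
  | .cond p q r => srepl (bf q) (bf p) (bf r)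

/-- Depth of a basic form. -/
def d : CS A → ℕ
  | .cond p _ r => 1 + max (d p) (d r)
  | _ => 0

end CS
namespace CS
variable {A : Type} [DecidableEq A]
def fA (a : A) : CS A → CS A
  | .cond p (.atom b) q => if b = a then .cond (fA a p) (.atom a) (fA a p) else .cond p (.atom b) q
  | x => x
def gA (a : A) : CS A → CS A
  | .cond p (.atom b) q => if b = a then .cond (gA a q) (.atom a) (gA a q) else .cond p (.atom b) q
  | x => x
theorem d_fA (a : A) : ∀ p : CS A, d (fA a p) ≤ d p
  | .tt => le_refl _
  | .ff => le_refl _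
  | .atom _ => le_refl _
  | .cond p .tt q => le_refl _
  | .cond p .ff q => le_refl _
  | .cond p (.atom b) q => by
      by_cases h : b = a
      · have ih := d_fA a p
        simp only [fA, h, if_true, d]
        omega
      · simp [fA, h]
  | .cond p (.cond x y z) q => le_refl _
theorem d_gA (a : A) : ∀ p : CS A, d (gA a p) ≤ d p
  | .tt => le_refl _
  | .ff => le_refl _
  | .atom _ => le_refl _
  | .cond p .tt q => le_refl _
  | .cond p .ff q => le_refl _
  | .cond p (.atom b) q => by
      by_cases h : b = a
      · have ih := d_gA a q
        simp only [gA, h, if_true, d]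
        omega
      · simp [gA, h]
  | .cond p (.cond x y z) q => le_refl _
def rpf : CS A → CS A
  | .cond p (.atom a) q => .cond (rpf (fA a p)) (.atom a) (rpf (gA a q))
  | x => x
termination_by p => d p
decreasing_by
  · exact Nat.lt_of_le_of_lt (d_fA _ p) (by simp only [d]; omega)
  · exact Nat.lt_of_le_of_lt (d_gA _ q) (by simp only [d]; omega)
end CS
namespace CS
variable {A : Type} [DecidableEq A]

/-- Memorizing auxiliary function ℓ_a on basic forms. -/
def lA (a : A) : CS A → CS A
  | .cond p (.atom b) q => if b = a then lA a p else .cond (lA a p) (.atom b) (lA a q)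
  | x => x

/-- Memorizing auxiliary function r_a on basic forms. -/
def rA (a : A) : CS A → CS A
  | .cond p (.atom b) q => if b = a then rA a q else .cond (rA a p) (.atom b) (rA a q)
  | x => x

theorem d_lA (a : A) : ∀ p : CS A, d (lA a p) ≤ d p
  | .tt => le_refl _
  | .ff => le_refl _
  | .atom _ => le_refl _
  | .cond p .tt q => le_refl _
  | .cond p .ff q => le_refl _
  | .cond p (.atom b) q => by
      by_cases h : b = a
      · have ih := d_lA a p
        simp only [lA, h, if_true, d]
        omega
      · have ih1 := d_lA a p
        have ih2 := d_lA a q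
        simp only [lA, h, if_false, d]
        omega
  | .cond p (.cond x y z) q => le_refl _

theorem d_rA (a : A) : ∀ p : CS A, d (rA a p) ≤ d p
  | .tt => le_refl _
  | .ff => le_refl _
  | .atom _ => le_refl _
  | .cond p .tt q => le_refl _
  | .cond p .ff q => le_refl _
  | .cond p (.atom b) q => by
      by_cases h : b = a
      · have ih := d_rA a q
        simp only [rA, h, if_true, d]
        omega
      · have ih1 := d_rA a p
        have ih2 := d_rA a q
        simp only [rA, h, if_false, d]
        omega
  | .cond p (.cond x y z) q => le_refl _

/-- The function mf transforming basic forms into mem-basic forms. -/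
def mf : CS A → CS A
  | .cond p (.atom a) q => .cond (mf (lA a p)) (.atom a) (mf (rA a q))
  | x => x
termination_by p => d p
decreasing_by
  · exact Nat.lt_of_le_of_lt (d_lA _ p) (by simp only [d]; omega)
  · exact Nat.lt_of_le_of_lt (d_rA _ q) (by simp only [d]; omega)

/-- Depth of an evaluation tree. -/
def ET.d : ET A → ℕ
  | .node l _ r => 1 + max (ET.d l) (ET.d r)
  | _ => 0

/-- Repetition-proof auxiliary transformation F_a on evaluation trees. -/
def ET.FA (a : A) : ET A → ET A
  | .node l b r => if b = a then .node (ET.FA a l) a (ET.FA a l) else .node l b r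
  | x => x

/-- Repetition-proof auxiliary transformation G_a on evaluation trees. -/
def ET.GA (a : A) : ET A → ET A
  | .node l b r => if b = a then .node (ET.GA a r) a (ET.GA a r) else .node l b r
  | x => x

theorem ET.d_FA (a : A) : ∀ x : ET A, ET.d (ET.FA a x) ≤ ET.d x
  | .tt => le_refl _
  | .ff => le_refl _
  | .node l b r => by
      by_cases h : b = a
      · have ih := ET.d_FA a l
        simp only [ET.FA, h, if_true, ET.d]
        omega
      · simp [ET.FA, h]

theorem ET.d_GA (a : A) : ∀ x : ET A, ET.d (ET.GA a x) ≤ ET.d x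
  | .tt => le_refl _
  | .ff => le_refl _
  | .node l b r => by
      by_cases h : b = a
      · have ih := ET.d_GA a r
        simp only [ET.GA, h, if_true, ET.d]
        omega
      · simp [ET.GA, h]

/-- The transformation rp on evaluation trees. -/
def ET.rp : ET A → ET A
  | .node l a r => .node (ET.rp (ET.FA a l)) a (ET.rp (ET.GA a r))
  | x => x
termination_by x => ET.d x
decreasing_by
  · exact Nat.lt_of_le_of_lt (ET.d_FA _ l) (by simp only [ET.d]; omega)
  · exact Nat.lt_of_le_of_lt (ET.d_GA _ r) (by simp only [ET.d]; omega)

end CS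
namespace CS
variable {A : Type}

/-- Side condition for rp-basic forms: a non-constant immediate subterm of a node
labeled `a` either has central condition different from `a`, or equal outer arguments. -/
def SideOk (a : A) : CS A → Prop
  | .tt => True
  | .ff => True
  | .cond p (.atom b) q => b ≠ a ∨ p = q
  | _ => False

/-- Rp-basic forms. -/
inductive IsRpBasic : CS A → Prop
  | tt : IsRpBasic tt
  | ff : IsRpBasic ff
  | cond {p q : CS A} (a : A) : IsRpBasic p → IsRpBasic q →
      SideOk a p → SideOk a q → IsRpBasic (cond p (atom a) q)

/-- Mem-basic forms over a subset A' of the atoms. -/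
inductive IsMemBasicOver : Set A → CS A → Prop
  | tt (A' : Set A) : IsMemBasicOver A' tt
  | ff (A' : Set A) : IsMemBasicOver A' ff
  | cond {A' : Set A} {p q : CS A} (a : A) : a ∈ A' →
      IsMemBasicOver (A' \ {a}) p → IsMemBasicOver (A' \ {a}) q →
      IsMemBasicOver A' (cond p (atom a) q)

/-- Mem-basic forms. -/
def IsMemBasic (p : CS A) : Prop := ∃ A' : Set A, IsMemBasicOver A' p

/-- Provability from CPrp: CP plus the repetition-proof axiom schemes. -/
inductive CPrp : CS A → CS A → Prop
  | refl (p : CS A) : CPrp p p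
  | symm {p q} : CPrp p q → CPrp q p
  | trans {p q r} : CPrp p q → CPrp q r → CPrp p r
  | congr {p p' q q' r r'} :
      CPrp p p' → CPrp q q' → CPrp r r' → CPrp (.cond p q r) (.cond p' q' r')
  | cp1 (x y : CS A) : CPrp (.cond x .tt y) x
  | cp2 (x y : CS A) : CPrp (.cond x .ff y) y
  | cp3 (x : CS A) : CPrp (.cond .tt x .ff) x
  | cp4 (x y z u v : CS A) :
      CPrp (.cond x (.cond y z u) v) (.cond (.cond x y v) z (.cond x u v))
  | rp1 (a : A) (x y z : CS A) :
      CPrp (.cond (.cond x (.atom a) y) (.atom a) z)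
           (.cond (.cond x (.atom a) x) (.atom a) z)
  | rp2 (a : A) (x y z : CS A) :
      CPrp (.cond x (.atom a) (.cond y (.atom a) z))
           (.cond x (.atom a) (.cond z (.atom a) z))

/-- Provability from CPmem: CP plus the memorizing axiom. -/
inductive CPmem : CS A → CS A → Prop
  | refl (p : CS A) : CPmem p p
  | symm {p q} : CPmem p q → CPmem q p
  | trans {p q r} : CPmem p q → CPmem q r → CPmem p r
  | congr {p p' q q' r r'} :
      CPmem p p' → CPmem q q' → CPmem r r' → CPmem (.cond p q r) (.cond p' q' r')
  | cp1 (x y : CS A) : CPmem (.cond x .tt y) x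
  | cp2 (x y : CS A) : CPmem (.cond x .ff y) y
  | cp3 (x : CS A) : CPmem (.cond .tt x .ff) x
  | cp4 (x y z u v : CS A) :
      CPmem (.cond x (.cond y z u) v) (.cond (.cond x y v) z (.cond x u v))
  | mem (x y z u v w : CS A) :
      CPmem (.cond x y (.cond z u (.cond v y w))) (.cond x y (.cond z u w))

end CS

/-! Normalize bottom-up: once the three arguments of `P ◁ Q ▷ R` are basic forms, axiom CP4
pushes the outer conditional through the basic form of `Q` down to its leaves, where CP1 and
CP2 replace `T` by the basic form of `P` and `F` by that of `R`. -/

namespace CS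
variable {A : Type}

theorem IsBasic.srepl {y p r : CS A} (hy : IsBasic y) (hp : IsBasic p) (hr : IsBasic r) :
    IsBasic (srepl y p r) := by
  induction hy with
  | tt => exact hp
  | ff => exact hr
  | cond a _ _ ihl ihr => exact IsBasic.cond a ihl ihr

theorem cp_cond_srepl {y : CS A} (hy : IsBasic y) (p r : CS A) :
    CP (.cond p y r) (srepl y p r) := by
  induction hy with
  | tt => exact CP.cp1 p r
  | ff => exact CP.cp2 p r
  | cond a _ _ ihl ihr => exact CP.trans (CP.cp4 _ _ _ _ _) (CP.congr ihl (CP.refl _) ihr)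

theorem isBasic_bf (P : CS A) : IsBasic (bf P) := by
  induction P with
  | tt => exact IsBasic.tt
  | ff => exact IsBasic.ff
  | atom a => exact IsBasic.cond a IsBasic.tt IsBasic.ff
  | cond p q r ihp ihq ihr => exact ihq.srepl ihp ihr

theorem cp_bf (P : CS A) : CP P (bf P) := by
  induction P with
  | tt => exact CP.refl _
  | ff => exact CP.refl _
  | atom a => exact CP.symm (CP.cp3 _)
  | cond p q r ihp ihq ihr =>
    exact CP.trans (CP.congr ihp ihq ihr) (cp_cond_srepl (isBasic_bf q) _ _)

end CS

theorem stmt0 {A : Type} (P : CS A) :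
    ∃ Q : CS A, CS.IsBasic Q ∧ CS.CP P Q :=
  ⟨CS.bf P, CS.isBasic_bf P, CS.cp_bf P⟩
end

section
/- The axiom systems CPst (CP plus (x◁y▷z)◁u▷v = (x◁u▷v)◁y▷(z◁u▷v) and (x◁y▷z)◁y▷u = x◁y▷u) and CPs (CP plus x◁y▷(z◁u▷(v◁y▷w)) = x◁y▷(z◁u▷w) and F◁x▷F = F) prove exactly the same equations: each axiom of either system is derivable in the other. -/
/-- Terms over variables V with constants T, F and the ternary conditional. -/
inductive Tm (V : Type) : Type
  | var : V → Tm V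
  | tt : Tm V
  | ff : Tm V
  | cond : Tm V → Tm V → Tm V → Tm V

namespace Tm

variable {V : Type}

/-- Substitution of terms for variables. -/
def subst (σ : V → Tm V) : Tm V → Tm V
  | .var v => σ v
  | .tt => .tt
  | .ff => .ff
  | .cond p q r => .cond (subst σ p) (subst σ q) (subst σ r)

/-- Equational-logic derivability from a set of axioms (closed under
reflexivity, symmetry, transitivity, congruence and substitution). -/
inductive Deriv (Ax : Tm V → Tm V → Prop) : Tm V → Tm V → Prop
  | ax {p q} : Ax p q → Deriv Ax p q
  | refl (p : Tm V) : Deriv Ax p p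
  | symm {p q} : Deriv Ax p q → Deriv Ax q p
  | trans {p q r} : Deriv Ax p q → Deriv Ax q r → Deriv Ax p r
  | congr {p p' q q' r r'} : Deriv Ax p p' → Deriv Ax q q' → Deriv Ax r r' →
      Deriv Ax (.cond p q r) (.cond p' q' r')
  | subst {p q} (σ : V → Tm V) : Deriv Ax p q → Deriv Ax (subst σ p) (subst σ q)

/-- The axioms of CP, as schemes. -/
inductive CPAx : Tm V → Tm V → Prop
  | cp1 (x y : Tm V) : CPAx (.cond x .tt y) x
  | cp2 (x y : Tm V) : CPAx (.cond x .ff y) y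
  | cp3 (x : Tm V) : CPAx (.cond .tt x .ff) x
  | cp4 (x y z u v : Tm V) :
      CPAx (.cond x (.cond y z u) v) (.cond (.cond x y v) z (.cond x u v))

/-- The axioms of CPst: CP plus CPstat and the contraction law. -/
inductive CPstAx : Tm V → Tm V → Prop
  | cp {p q : Tm V} : CPAx p q → CPstAx p q
  | stat (x y z u v : Tm V) :
      CPstAx (.cond (.cond x y z) u v) (.cond (.cond x u v) y (.cond z u v))
  | contr (x y z u : Tm V) :
      CPstAx (.cond (.cond x y z) y u) (.cond x y u)

/-- The axioms of CPs: CP plus the memorizing axiom and F ◁ x ▷ F = F. -/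
inductive CPsAx : Tm V → Tm V → Prop
  | cp {p q : Tm V} : CPAx p q → CPsAx p q
  | mem (x y z u v w : Tm V) :
      CPsAx (.cond x y (.cond z u (.cond v y w))) (.cond x y (.cond z u w))
  | fxf (x : Tm V) : CPsAx (.cond .ff x .ff) .ff

end Tm

namespace Tm

variable {V : Type}

section Generic

variable {Ax : Tm V → Tm V → Prop}

/-- negation -/
def ng (b : Tm V) : Tm V := .cond .ff b .tt

lemma d1 (hcp : ∀ p q : Tm V, CPAx p q → Deriv Ax p q) (x y : Tm V) : Deriv Ax (.cond x .tt y) x := hcp _ _ (CPAx.cp1 x y)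
lemma d2 (hcp : ∀ p q : Tm V, CPAx p q → Deriv Ax p q) (x y : Tm V) : Deriv Ax (.cond x .ff y) y := hcp _ _ (CPAx.cp2 x y)
lemma d3 (hcp : ∀ p q : Tm V, CPAx p q → Deriv Ax p q) (x : Tm V) : Deriv Ax (.cond .tt x .ff) x := hcp _ _ (CPAx.cp3 x)
lemma d4 (hcp : ∀ p q : Tm V, CPAx p q → Deriv Ax p q) (x y z u v : Tm V) :
    Deriv Ax (.cond x (.cond y z u) v) (.cond (.cond x y v) z (.cond x u v)) :=
  hcp _ _ (CPAx.cp4 x y z u v)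

/-- flip: a ◁ b ▷ c = c ◁ ¬b ▷ a -/
lemma dflip (hcp : ∀ p q : Tm V, CPAx p q → Deriv Ax p q) (a b c : Tm V) : Deriv Ax (.cond a b c) (.cond c (ng b) a) :=
  .symm ((d4 hcp c .ff b .tt a).trans
    (.congr (d2 hcp c a) (.refl b) (d1 hcp c a)))

/-- ¬¬b = b -/
lemma dnegneg (hcp : ∀ p q : Tm V, CPAx p q → Deriv Ax p q) (b : Tm V) : Deriv Ax (ng (ng b)) b :=
  ((d4 hcp .ff .ff b .tt .tt).trans
    (.congr (d2 hcp .ff .tt) (.refl b) (d1 hcp .ff .tt))).trans (d3 hcp b)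

end Generic

section CPsSide

lemma s_cp (p q : Tm V) (h : CPAx p q) : Deriv CPsAx p q := .ax (.cp h)

/-- right contraction in CPs -/
lemma s_rc (x y v w : Tm V) :
    Deriv CPsAx (.cond x y (.cond v y w)) (.cond x y w) := by
  have h1 : Deriv CPsAx (.cond x y (.cond v y w))
      (.cond x y (.cond .tt .ff (.cond v y w))) :=
    .congr (.refl x) (.refl y) (.symm (d2 s_cp .tt (.cond v y w)))
  have h2 : Deriv CPsAx (.cond x y (.cond .tt .ff (.cond v y w)))
      (.cond x y (.cond .tt .ff w)) := .ax (.mem x y .tt .ff v w)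
  exact (h1.trans h2).trans (.congr (.refl x) (.refl y) (d2 s_cp .tt w))

/-- contraction in CPs -/
lemma s_contr (x y z u : Tm V) :
    Deriv CPsAx (.cond (.cond x y z) y u) (.cond x y u) := by
  have h1 := dflip s_cp (V := V) (.cond x y z) y u
  have h2 : Deriv CPsAx (.cond u (ng y) (.cond x y z))
      (.cond u (ng y) (.cond z (ng y) x)) :=
    .congr (.refl u) (.refl (ng y)) (dflip s_cp x y z)
  have h3 := s_rc u (ng y) z x
  have h4 := dflip s_cp (V := V) u (ng y) x
  have h5 : Deriv CPsAx (.cond x (ng (ng y)) u) (.cond x y u) :=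
    .congr (.refl x) (dnegneg s_cp y) (.refl u)
  exact (((h1.trans h2).trans h3).trans h4).trans h5

/-- idle test: b ◁ u ▷ b = b -/
lemma s_id (b u : Tm V) : Deriv CPsAx (.cond b u b) b := by
  have h1 : Deriv CPsAx (.cond b (.cond .ff u .ff) b)
      (.cond (.cond b .ff b) u (.cond b .ff b)) := d4 s_cp b .ff u .ff b
  have h2 : Deriv CPsAx (.cond (.cond b .ff b) u (.cond b .ff b)) (.cond b u b) :=
    .congr (d2 s_cp b b) (.refl u) (d2 s_cp b b)
  have h3 : Deriv CPsAx (.cond b (.cond .ff u .ff) b) (.cond b .ff b) :=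
    .congr (.refl b) (.ax (.fxf u)) (.refl b)
  exact (Deriv.symm (h1.trans h2)).trans (h3.trans (d2 s_cp b b))

/-- memory variant: x ◁ y ▷ ((v ◁ y ▷ w) ◁ u ▷ z) = x ◁ y ▷ (w ◁ u ▷ z) -/
lemma s_v1 (x y v w u z : Tm V) :
    Deriv CPsAx (.cond x y (.cond (.cond v y w) u z)) (.cond x y (.cond w u z)) := by
  have h1 : Deriv CPsAx (.cond x y (.cond (.cond v y w) u z))
      (.cond x y (.cond z (ng u) (.cond v y w))) :=
    .congr (.refl x) (.refl y) (dflip s_cp (.cond v y w) u z)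
  have h2 : Deriv CPsAx (.cond x y (.cond z (ng u) (.cond v y w)))
      (.cond x y (.cond z (ng u) w)) := .ax (.mem x y z (ng u) v w)
  have h3 : Deriv CPsAx (.cond x y (.cond z (ng u) w))
      (.cond x y (.cond w u z)) :=
    .congr (.refl x) (.refl y) (.symm (dflip s_cp w u z))
  exact (h1.trans h2).trans h3

/-- memory variant: ((v ◁ y ▷ w) ◁ u ▷ z) ◁ y ▷ x = (v ◁ u ▷ z) ◁ y ▷ x -/
lemma s_v2 (x y v w u z : Tm V) :
    Deriv CPsAx (.cond (.cond (.cond v y w) u z) y x)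
      (.cond (.cond v u z) y x) := by
  have h1 := dflip s_cp (V := V) (.cond (.cond v y w) u z) y x
  have h2 : Deriv CPsAx (.cond x (ng y) (.cond (.cond v y w) u z))
      (.cond x (ng y) (.cond (.cond w (ng y) v) u z)) :=
    .congr (.refl x) (.refl (ng y))
      (.congr (dflip s_cp v y w) (.refl u) (.refl z))
  have h3 := s_v1 x (ng y) w v u z
  have h4 := dflip s_cp (V := V) x (ng y) (.cond v u z)
  have h5 : Deriv CPsAx (.cond (.cond v u z) (ng (ng y)) x)
      (.cond (.cond v u z) y x) :=
    .congr (.refl _) (dnegneg s_cp y) (.refl x)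
  exact (((h1.trans h2).trans h3).trans h4).trans h5

lemma s_stat (x y z u v : Tm V) :
    Deriv CPsAx (.cond (.cond x y z) u v)
      (.cond (.cond x u v) y (.cond z u v)) := by
  have h1 := (s_id (.cond (.cond x y z) u v) y).symm
  have h2 := s_v2 (.cond (.cond x y z) u v) y x z u v
  have h3 := s_v1 (.cond x u v) y x z u v
  exact (h1.trans h2).trans h3

end CPsSide

section CPstSide

lemma t_cp (p q : Tm V) (h : CPAx p q) : Deriv CPstAx p q := .ax (.cp h)

lemma t_fxf (x : Tm V) : Deriv CPstAx (.cond .ff x .ff) .ff := by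
  have h1 : Deriv CPstAx (.cond (.cond .tt x .ff) .ff .ff)
      (.cond (.cond .tt .ff .ff) x (.cond .ff .ff .ff)) := .ax (.stat .tt x .ff .ff .ff)
  have h2 : Deriv CPstAx (.cond (.cond .tt .ff .ff) x (.cond .ff .ff .ff))
      (.cond .ff x .ff) :=
    .congr (d2 t_cp .tt .ff) (.refl x) (d2 t_cp .ff .ff)
  exact (Deriv.symm (h1.trans h2)).trans (d2 t_cp (.cond .tt x .ff) .ff)

/-- right contraction in CPst -/
lemma t_rc (x y z u : Tm V) :
    Deriv CPstAx (.cond x y (.cond z y u)) (.cond x y u) := by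
  have h1 : Deriv CPstAx (.cond (.cond x y z) y u)
      (.cond (.cond x y u) y (.cond z y u)) := .ax (.stat x y z y u)
  have h2 : Deriv CPstAx (.cond (.cond x y u) y (.cond z y u))
      (.cond x y (.cond z y u)) := .ax (.contr x y u (.cond z y u))
  have h3 : Deriv CPstAx (.cond (.cond x y z) y u) (.cond x y u) := .ax (.contr x y z u)
  exact ((h1.trans h2).symm.trans h3)

/-- distribution over the else slot -/
lemma t_d3 (a b c y d : Tm V) :
    Deriv CPstAx (.cond a b (.cond c y d))
      (.cond (.cond a b c) y (.cond a b d)) := by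
  have h1 := dflip t_cp (V := V) a b (.cond c y d)
  have h2 : Deriv CPstAx (.cond (.cond c y d) (ng b) a)
      (.cond (.cond c (ng b) a) y (.cond d (ng b) a)) := .ax (.stat c y d (ng b) a)
  have h3 : Deriv CPstAx (.cond (.cond c (ng b) a) y (.cond d (ng b) a))
      (.cond (.cond a b c) y (.cond a b d)) :=
    .congr (.symm (dflip t_cp a b c)) (.refl y) (.symm (dflip t_cp a b d))
  exact (h1.trans h2).trans h3

lemma t_mem (x y z u v w : Tm V) :
    Deriv CPstAx (.cond x y (.cond z u (.cond v y w)))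
      (.cond x y (.cond z u w)) := by
  have h1 : Deriv CPstAx (.cond x y (.cond z u (.cond v y w)))
      (.cond x y (.cond (.cond z u v) y (.cond z u w))) :=
    .congr (.refl x) (.refl y) (t_d3 z u v y w)
  exact h1.trans (t_rc x y (.cond z u v) (.cond z u w))

end CPstSide

lemma deriv_mono {Ax1 Ax2 : Tm V → Tm V → Prop}
    (h : ∀ p q, Ax1 p q → Deriv Ax2 p q) :
    ∀ {p q : Tm V}, Deriv Ax1 p q → Deriv Ax2 p q := by
  intro p q d
  induction d with
  | ax ha => exact h _ _ ha
  | refl p => exact .refl p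
  | symm _ ih => exact ih.symm
  | trans _ _ ih1 ih2 => exact ih1.trans ih2
  | congr _ _ _ ih1 ih2 ih3 => exact .congr ih1 ih2 ih3
  | subst σ _ ih => exact ih.subst σ

end Tm

theorem stmt18 {V : Type} (p q : Tm V) :
    Tm.Deriv Tm.CPstAx p q ↔ Tm.Deriv Tm.CPsAx p q := by
  constructor
  · refine Tm.deriv_mono (fun p q h => ?_)
    cases h with
    | cp h => exact .ax (.cp h)
    | stat x y z u v => exact Tm.s_stat x y z u v
    | contr x y z u => exact Tm.s_contr x y z u
  · refine Tm.deriv_mono (fun p q h => ?_)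
    cases h with
    | cp h => exact .ax (.cp h)
    | mem x y z u v w => exact Tm.t_mem x y z u v w
    | fxf x => exact Tm.t_fxf x
end

section
/- In CPs (CP extended with the memorizing axiom x◁y▷(z◁u▷(v◁y▷w)) = x◁y▷(z◁u▷w) and the axiom F◁x▷F = F), the law P = P◁Q▷P is derivable for all terms P and Q, and moreover the commutativity law x◁y▷F = y◁x▷F is derivable. -/
namespace CPsHelp
open Tm

variable {V : Type}

abbrev D (p q : Tm V) : Prop := Tm.Deriv Tm.CPsAx p q

lemma a1 (x y : Tm V) : D (.cond x .tt y) x := .ax (.cp (.cp1 x y))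
lemma a2 (x y : Tm V) : D (.cond x .ff y) y := .ax (.cp (.cp2 x y))
lemma a3 (x : Tm V) : D (.cond .tt x .ff) x := .ax (.cp (.cp3 x))
lemma a4 (x y z u v : Tm V) :
    D (.cond x (.cond y z u) v) (.cond (.cond x y v) z (.cond x u v)) :=
  .ax (.cp (.cp4 x y z u v))
lemma memx (x y z u v w : Tm V) :
    D (.cond x y (.cond z u (.cond v y w))) (.cond x y (.cond z u w)) :=
  .ax (.mem x y z u v w)
lemma fxf (x : Tm V) : D (.cond .ff x .ff) .ff := .ax (.fxf x)

/-- T ◁ z ▷ T = T -/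
lemma d1 (z : Tm V) : D (.cond .tt z .tt) .tt :=
  (((Deriv.congr (a2 .ff .tt) (.refl z) (a2 .ff .tt)).symm.trans
      (a4 .ff .ff z .ff .tt).symm).trans
    (Deriv.congr (.refl _) (fxf z) (.refl _))).trans (a2 .ff .tt)

/-- x ◁ z ▷ x = x -/
lemma d2 (x z : Tm V) : D (.cond x z x) x :=
  (((Deriv.congr (a1 x .ff) (.refl z) (a1 x .ff)).symm.trans
      (a4 x .tt z .tt .ff).symm).trans
    (Deriv.congr (.refl x) (d1 z) (.refl .ff))).trans (a1 x .ff)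

/-- a ◁ (F◁y▷T) ▷ b = b ◁ y ▷ a -/
lemma d6 (a y b : Tm V) : D (.cond a (.cond .ff y .tt) b) (.cond b y a) :=
  (a4 a .ff y .tt b).trans (Deriv.congr (a2 a b) (.refl y) (a1 a b))

/-- swap: p ◁ q ▷ r = r ◁ (F◁q▷T) ▷ p -/
lemma sw (p q r : Tm V) : D (.cond p q r) (.cond r (.cond .ff q .tt) p) :=
  (d6 r q p).symm

/-- memory, inner test in then-branch of the inner conditional:
    p ◁ y ▷ ((a◁y▷b) ◁ u ▷ c) = p ◁ y ▷ (b ◁ u ▷ c) -/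
lemma met (p y a b u c : Tm V) :
    D (.cond p y (.cond (.cond a y b) u c)) (.cond p y (.cond b u c)) :=
  ((Deriv.congr (.refl p) (.refl y) (sw (.cond a y b) u c)).trans
    (memx p y c (.cond .ff u .tt) a b)).trans
  (Deriv.congr (.refl p) (.refl y) (d6 c u b))

/-- memory in the then-branch of the outer conditional:
    ((a◁y▷b) ◁ u ▷ c) ◁ y ▷ d = (a ◁ u ▷ c) ◁ y ▷ d -/
lemma mtt (a y b u c d : Tm V) :
    D (.cond (.cond (.cond a y b) u c) y d) (.cond (.cond a u c) y d) :=
  (((sw (.cond (.cond a y b) u c) y d).trans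
      (Deriv.congr (.refl d) (.refl _)
        (Deriv.congr (sw a y b) (.refl u) (.refl c)))).trans
    (met d (.cond .ff y .tt) b a u c)).trans
  (d6 d y (.cond a u c))

/-- the static law -/
lemma stat (x y z u v : Tm V) :
    D (.cond (.cond x y z) u v) (.cond (.cond x u v) y (.cond z u v)) :=
  ((d2 (.cond (.cond x y z) u v) y).symm.trans
    (mtt x y z u v (.cond (.cond x y z) u v))).trans
  (met (.cond x u v) y x z u v)

end CPsHelp

theorem stmt19 {V : Type} :
    (∀ P Q : Tm V, Tm.Deriv Tm.CPsAx P (Tm.cond P Q P)) ∧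
    (∀ x y : Tm V, Tm.Deriv Tm.CPsAx (Tm.cond x y Tm.ff) (Tm.cond y x Tm.ff)) := by
  constructor
  · intro P Q
    exact (CPsHelp.d2 P Q).symm
  · intro x y
    exact ((Tm.Deriv.congr (CPsHelp.a3 x).symm (.refl y) (.refl .ff)).trans
        (CPsHelp.stat .tt x .ff y .ff)).trans
      (Tm.Deriv.congr (CPsHelp.a3 y) (.refl x) (CPsHelp.fxf y))
end
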